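/- arXiv:math/9912129 — 5 statements merged into one kernel-verified Lean document; each statement's English description precedes it below -/
import Mathlib

section
/- Real numbers a_0, a_1, a_2, a_3 satisfy the three equations a_0² + a_1² + a_2² + a_3² = 1, a_0·a_2 + a_1·a_3 = 0, and a_0 + a_1 + a_2 + a_3 = √2 if and only if there exists θ ∈ ℝ such that a_0 = (1 − cos θ + sin θ)/(2√2), a_1 = (1 − cos θ − sin θ)/(2√2), a_2 = (1 + cos θ − sin θ)/(2√2), a_3 = (1 + cos θ + sin θ)/(2√2). -/
/-!
Write `p = a₀ + a₂`, `q = a₁ + a₃`. Normalization plus twice the orthogonality relation gives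
`p² + q² = 1`, and with `p + q = √2` this forces `(p - q)² = 2 (p² + q²) - (p + q)² = 0`, i.e.
`p = q = 1 / √2`. Normalization minus twice orthogonality gives `(a₀ - a₂)² + (a₁ - a₃)² = 1`,
equivalently `((a₂ + a₃ - a₀ - a₁) / √2, (a₀ - a₁ - a₂ + a₃) / √2)` is a point `(cos θ, sin θ)`
of the unit circle.
-/

open Real

theorem exists_cos_sin_eq_of_sq_add_sq_eq_one {x y : ℝ} (h : x ^ 2 + y ^ 2 = 1) :
    ∃ θ : ℝ, cos θ = x ∧ sin θ = y := by
  set z : ℂ := ⟨x, y⟩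
  have hz : ‖z‖ = 1 := by
    rw [← sq_eq_sq₀ (norm_nonneg z) zero_le_one, Complex.sq_norm, Complex.normSq_apply]
    simpa [sq] using h
  have hz0 : z ≠ 0 := norm_ne_zero_iff.mp (by rw [hz]; exact one_ne_zero)
  exact ⟨z.arg, by rw [Complex.cos_arg hz0, hz, div_one], by rw [Complex.sin_arg, hz, div_one]⟩

theorem exists_sq_add_sq_eq_one_iff_exists_angle {P : ℝ → ℝ → Prop} :
    (∃ x y : ℝ, x ^ 2 + y ^ 2 = 1 ∧ P x y) ↔ ∃ θ : ℝ, P (cos θ) (sin θ) := by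
  constructor
  · rintro ⟨x, y, hxy, hP⟩
    obtain ⟨θ, rfl, rfl⟩ := exists_cos_sin_eq_of_sq_add_sq_eq_one hxy
    exact ⟨θ, hP⟩
  · rintro ⟨θ, hP⟩
    exact ⟨cos θ, sin θ, cos_sq_add_sin_sq θ, hP⟩

section FourTapFilter

variable {a₀ a₁ a₂ a₃ : ℝ}

theorem even_sum_eq_odd_sum_of_qmf (hnorm : a₀ ^ 2 + a₁ ^ 2 + a₂ ^ 2 + a₃ ^ 2 = 1)
    (horth : a₀ * a₂ + a₁ * a₃ = 0) (hsum : a₀ + a₁ + a₂ + a₃ = √2) :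
    a₀ + a₂ = a₁ + a₃ := by
  have hsq : (a₀ + a₂ - (a₁ + a₃)) ^ 2 = 0 := by
    linear_combination 2 * hnorm + 4 * horth - (a₀ + a₁ + a₂ + a₃ + √2) * hsum
      - sq_sqrt zero_le_two
  linarith [pow_eq_zero_iff two_ne_zero |>.mp hsq]

theorem qmf_iff_exists_sq_add_sq_eq_one :
    (a₀ ^ 2 + a₁ ^ 2 + a₂ ^ 2 + a₃ ^ 2 = 1 ∧ a₀ * a₂ + a₁ * a₃ = 0 ∧
        a₀ + a₁ + a₂ + a₃ = √2) ↔
      ∃ c s : ℝ, c ^ 2 + s ^ 2 = 1 ∧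
        a₀ = (1 - c + s) / (2 * √2) ∧ a₁ = (1 - c - s) / (2 * √2) ∧
        a₂ = (1 + c - s) / (2 * √2) ∧ a₃ = (1 + c + s) / (2 * √2) := by
  have h2 : √2 ^ 2 = 2 := sq_sqrt zero_le_two
  constructor
  · rintro ⟨hnorm, horth, hsum⟩
    have hpq := even_sum_eq_odd_sum_of_qmf hnorm horth hsum
    refine ⟨(a₂ + a₃ - a₀ - a₁) / √2, (a₀ - a₁ - a₂ + a₃) / √2, ?_, ?_, ?_, ?_, ?_⟩ <;>
      field_simp
    · linear_combination 2 * hnorm - 4 * horth - h2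
    all_goals rw [h2]; linarith
  · rintro ⟨c, s, hcs, rfl, rfl, rfl, rfl⟩
    refine ⟨?_, ?_, ?_⟩ <;> field_simp
    · linear_combination 4 * hcs - 4 * h2
    · linear_combination -2 * hcs
    · linear_combination -2 * h2

end FourTapFilter

theorem stmt_2 (a₀ a₁ a₂ a₃ : ℝ) :
    (a₀ ^ 2 + a₁ ^ 2 + a₂ ^ 2 + a₃ ^ 2 = 1 ∧ a₀ * a₂ + a₁ * a₃ = 0 ∧
        a₀ + a₁ + a₂ + a₃ = Real.sqrt 2) ↔
      ∃ θ : ℝ,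
        a₀ = (1 - Real.cos θ + Real.sin θ) / (2 * Real.sqrt 2) ∧
        a₁ = (1 - Real.cos θ - Real.sin θ) / (2 * Real.sqrt 2) ∧
        a₂ = (1 + Real.cos θ - Real.sin θ) / (2 * Real.sqrt 2) ∧
        a₃ = (1 + Real.cos θ + Real.sin θ) / (2 * Real.sqrt 2) :=
  qmf_iff_exists_sq_add_sq_eq_one.trans exists_sq_add_sq_eq_one_iff_exists_angle
end

section
/- Let a_0, a_1, a_2, a_3 be real numbers satisfying a_0²+a_1²+a_2²+a_3² = 1 and a_0 a_2 + a_1 a_3 = 0, and define m_0(z) = Σ_{k=0}^{3} a_k z^k and m_1(z) = Σ_{k=0}^{3} (−1)^k a_{3−k} z^k for z on the unit circle. Then for every z on the unit circle, the 2×2 matrix (1/√2)·[[m_0(z), m_0(−z)],[m_1(z), m_1(−z)]] is unitary. -/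
/-!
On the unit circle `conj z = z⁻¹`, so `m₁ z = -z³ · conj (m₀ (-z))` and `m₁ (-z) = z³ · conj (m₀ z)`:
the matrix has the shape `[[p, q], [-w q̄, w p̄]]` with `|w| = 1`, whose rows are orthogonal and
both of squared length `|p|² + |q|²`. In `|m₀ z|² + |m₀ (-z)|²` the odd-frequency terms cancel,
leaving `2 ∑ aₖ² + 4 (a₀a₂ + a₁a₃) Re z² = 2`.
-/

open Complex ComplexConjugate

theorem Matrix.smul_mem_unitaryGroup_of_normSq (c : ℝ) (p q w : ℂ) (hw : ‖w‖ = 1)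
    (hpq : c ^ 2 * (normSq p + normSq q) = 1) :
    (c : ℂ) • !![p, q; -w * conj q, w * conj p] ∈ Matrix.unitaryGroup (Fin 2) ℂ := by
  have hww : w * conj w = 1 := by rw [mul_conj, normSq_eq_norm_sq, hw]; norm_num
  have hpq' : (c : ℂ) ^ 2 * (p * conj p + q * conj q) = 1 := by
    simp only [mul_conj]; exact_mod_cast hpq
  rw [Matrix.mem_unitaryGroup_iff]
  ext i j
  fin_cases i <;> fin_cases j <;>
    simp only [Matrix.smul_of, Matrix.smul_cons, smul_eq_mul, Matrix.smul_empty, Fin.zero_eta,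
      Fin.mk_one, Fin.isValue, Matrix.mul_apply, Matrix.of_apply, Matrix.cons_val',
      Matrix.cons_val_fin_one, Matrix.cons_val_zero, Matrix.cons_val_one, Matrix.star_apply,
      RCLike.star_def, Fin.sum_univ_two, map_neg, map_mul, conj_conj, conj_ofReal,
      Matrix.one_apply_eq, Matrix.one_apply_ne, ne_eq, zero_ne_one, one_ne_zero, not_false_eq_true]
  · linear_combination hpq'
  · ring
  · ring
  · linear_combination (c : ℂ) ^ 2 * (p * conj p + q * conj q) * hww + hpq'

lemma cubic_reverse_eq_neg_pow_three_mul_conj (a₀ a₁ a₂ a₃ : ℝ) {z : ℂ} (hz : ‖z‖ = 1) :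
    (a₃ - a₂ * z + a₁ * z ^ 2 - a₀ * z ^ 3 : ℂ) =
      -z ^ 3 * conj (a₀ + a₁ * (-z) + a₂ * (-z) ^ 2 + a₃ * (-z) ^ 3) := by
  have hz0 : z ≠ 0 := by rintro rfl; simp at hz
  simp only [map_add, map_mul, map_pow, map_neg, conj_ofReal, ← inv_eq_conj hz]
  field_simp
  ring

lemma normSq_cubic_add_normSq_cubic_neg (a₀ a₁ a₂ a₃ : ℝ) {z : ℂ} (hz : ‖z‖ = 1) :
    normSq (a₀ + a₁ * z + a₂ * z ^ 2 + a₃ * z ^ 3) +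
        normSq (a₀ + a₁ * (-z) + a₂ * (-z) ^ 2 + a₃ * (-z) ^ 3) =
      2 * (a₀ ^ 2 + a₁ ^ 2 + a₂ ^ 2 + a₃ ^ 2) + 4 * (a₀ * a₂ + a₁ * a₃) * (z ^ 2).re := by
  have hz0 : z ≠ 0 := by rintro rfl; simp at hz
  apply ofReal_injective
  simp only [ofReal_add, ofReal_mul, ofReal_pow, ← mul_conj, re_eq_add_conj]
  simp only [map_add, map_mul, map_pow, map_neg, conj_ofReal, ← inv_eq_conj hz]
  push_cast
  field_simp
  ring

theorem stmt_3 (a₀ a₁ a₂ a₃ : ℝ)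
    (h1 : a₀ ^ 2 + a₁ ^ 2 + a₂ ^ 2 + a₃ ^ 2 = 1)
    (h2 : a₀ * a₂ + a₁ * a₃ = 0)
    (m₀ m₁ : ℂ → ℂ)
    (hm₀ : ∀ z : ℂ, m₀ z = a₀ + a₁ * z + a₂ * z ^ 2 + a₃ * z ^ 3)
    (hm₁ : ∀ z : ℂ, m₁ z = a₃ - a₂ * z + a₁ * z ^ 2 - a₀ * z ^ 3) :
    ∀ z : ℂ, ‖z‖ = 1 →
      ((Real.sqrt 2 : ℂ)⁻¹ • !![m₀ z, m₀ (-z); m₁ z, m₁ (-z)]) ∈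
        Matrix.unitaryGroup (Fin 2) ℂ := by
  intro z hz
  have hm₁z : m₁ z = -z ^ 3 * conj (m₀ (-z)) := by
    rw [hm₁, hm₀, cubic_reverse_eq_neg_pow_three_mul_conj a₀ a₁ a₂ a₃ hz]
  have hm₁nz : m₁ (-z) = z ^ 3 * conj (m₀ z) := by
    rw [hm₁, hm₀, cubic_reverse_eq_neg_pow_three_mul_conj a₀ a₁ a₂ a₃ (by rwa [norm_neg]), neg_neg]
    ring
  have hsum : normSq (m₀ z) + normSq (m₀ (-z)) = 2 := by
    rw [hm₀, hm₀, normSq_cubic_add_normSq_cubic_neg a₀ a₁ a₂ a₃ hz, h1, h2]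
    ring
  rw [hm₁z, hm₁nz, ← ofReal_inv]
  refine Matrix.smul_mem_unitaryGroup_of_normSq _ _ _ _ (by rw [norm_pow, hz, one_pow]) ?_
  rw [hsum, inv_pow, Real.sq_sqrt zero_le_two]
  norm_num
end

section
/- Define operators S_0, S_1 on ℓ²(ℤ) by S_0 e_n = (e_{1+2n} + e_{2+2n})/√2 and S_1 e_n = (−e_{1+2n} + e_{2+2n})/√2, and T_0, T_1 by T_0 e_n = (e_{2n} + e_{3+2n})/√2 and T_1 e_n = (e_{2n} − e_{3+2n})/√2, where (e_n) is the standard orthonormal basis. Let U: ℓ²(ℤ) → ℓ²(ℤ) be the isometry with U e_n = e_{−3n−6}. Then U S_0 = T_0 U and U S_1 = T_1 U. -/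
open ContinuousLinearMap

noncomputable abbrev ell2Z : Type := lp (fun _ : ℤ => ℂ) 2

/-- The standard orthonormal basis vector `e n` of `ℓ²(ℤ)`. -/
noncomputable def e (n : ℤ) : ell2Z := lp.single 2 n (1 : ℂ)

lemma ext_of_e {A B : ell2Z →L[ℂ] ell2Z} (h : ∀ n : ℤ, A (e n) = B (e n)) : A = B := by
  refine ContinuousLinearMap.ext fun x => ?_
  have hs := lp.hasSum_single (p := 2) (E := fun _ : ℤ => ℂ) (by norm_num) x
  have hA := A.hasSum hs
  have hB := B.hasSum hs
  have : (fun i : ℤ => A (lp.single 2 i (x i))) = fun i : ℤ => B (lp.single 2 i (x i)) := by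
    funext i
    have : lp.single 2 i (x i) = (x i) • e i := by
      rw [e, ← lp.single_smul]; simp
    rw [this, map_smul, map_smul, h]
  rw [this] at hA
  exact hA.unique hB

theorem stmt_14 (S₀ S₁ T₀ T₁ U : ell2Z →L[ℂ] ell2Z)
    (hS₀ : ∀ n : ℤ, S₀ (e n) = (Real.sqrt 2 : ℂ)⁻¹ • (e (1 + 2 * n) + e (2 + 2 * n)))
    (hS₁ : ∀ n : ℤ, S₁ (e n) = (Real.sqrt 2 : ℂ)⁻¹ • (-e (1 + 2 * n) + e (2 + 2 * n)))
    (hT₀ : ∀ n : ℤ, T₀ (e n) = (Real.sqrt 2 : ℂ)⁻¹ • (e (2 * n) + e (3 + 2 * n)))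
    (hT₁ : ∀ n : ℤ, T₁ (e n) = (Real.sqrt 2 : ℂ)⁻¹ • (e (2 * n) - e (3 + 2 * n)))
    (hUiso : ∀ x : ell2Z, ‖U x‖ = ‖x‖)
    (hU : ∀ n : ℤ, U (e n) = e (-3 * n - 6)) :
    U ∘L S₀ = T₀ ∘L U ∧ U ∘L S₁ = T₁ ∘L U := by
  constructor
  · apply ext_of_e
    intro n
    simp only [comp_apply, hS₀, hU, map_smul, map_add, hT₀]
    ring_nf
    rw [add_comm]
  · apply ext_of_e
    intro n
    simp only [comp_apply, hS₁, hU, map_smul, map_add, map_neg, hT₁]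
    ring_nf
    abel
end

section
/- Define operators S_0, S_1 on ℓ²(ℤ) by S_0 e_n = (e_{1+2n} + e_{2+2n})/√2 and S_1 e_n = (−e_{1+2n} + e_{2+2n})/√2. Then the closed subspaces H_+ = closed span{e_n : n ≥ −1} and H_− = closed span{e_n : n ≤ −2} are both invariant under S_0, S_1, S_0*, and S_1*. -/
/-!
Both `S₀` and `S₁` send `e n` into the span of `e (1 + 2n)` and `e (2 + 2n)`, and the maps
`n ↦ 1 + 2n`, `n ↦ 2 + 2n` send each of the complementary sets `{n ≥ -1}` and `{n ≤ -2}` into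
itself. This gives invariance of both closed spans under `Sᵢ`. Since `e` is a Hilbert basis, the
two closed spans are each other's orthogonal complements, so invariance of one under `Sᵢ` is
invariance of the other under `Sᵢ*`.
-/

open ContinuousLinearMap

/-- The closed span of `{e n : n ≥ -1}`. -/
noncomputable def Hplus : Submodule ℂ ell2Z :=
  (Submodule.span ℂ {x : ell2Z | ∃ n : ℤ, -1 ≤ n ∧ x = e n}).topologicalClosure

/-- The closed span of `{e n : n ≤ -2}`. -/
noncomputable def Hminus : Submodule ℂ ell2Z :=
  (Submodule.span ℂ {x : ell2Z | ∃ n : ℤ, n ≤ -2 ∧ x = e n}).topologicalClosure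

open Submodule Module.End Set

namespace HilbertBasis

variable {ι 𝕜 E : Type*} [RCLike 𝕜] [NormedAddCommGroup E] [InnerProductSpace 𝕜 E]

theorem orthogonal_closure_span_image (b : HilbertBasis ι 𝕜 E) (A : Set ι) :
    (span 𝕜 (b '' A)).topologicalClosureᗮ = (span 𝕜 (b '' Aᶜ)).topologicalClosure := by
  apply le_antisymm
  · intro x hx
    have repr_eq_zero : ∀ i ∈ A, b.repr x i = 0 := fun i hi => by
      rw [b.repr_apply_apply]
      exact inner_right_of_mem_orthogonal
        (le_topologicalClosure _ (subset_span (mem_image_of_mem b hi))) hx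
    refine mem_closure_of_tendsto (b.hasSum_repr x) (Filter.Eventually.of_forall fun s => ?_)
    refine sum_mem fun i _ => ?_
    by_cases hi : i ∈ A
    · simp [repr_eq_zero i hi]
    · exact smul_mem _ _ (subset_span (mem_image_of_mem b hi))
  · rw [orthogonal_closure]
    refine topologicalClosure_minimal _ (isOrtho_iff_le.1 (isOrtho_span.2 ?_))
      (isClosed_orthogonal _)
    rintro _ ⟨i, hi, rfl⟩ _ ⟨j, hj, rfl⟩
    exact b.orthonormal.inner_eq_zero (ne_of_mem_of_not_mem hj hi).symm

end HilbertBasis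

noncomputable def ell2Z.stdBasis : HilbertBasis ℤ ℂ ell2Z :=
  HilbertBasis.ofRepr (LinearIsometryEquiv.refl ℂ _)

theorem ell2Z.coe_stdBasis : ⇑ell2Z.stdBasis = e := by
  ext1 n
  rw [← ell2Z.stdBasis.repr_symm_single]
  rfl

noncomputable abbrev closedSpanE (A : Set ℤ) : Submodule ℂ ell2Z :=
  (span ℂ (e '' A)).topologicalClosure

theorem Hplus_eq : Hplus = closedSpanE (Ici (-1)) := by
  simp only [Hplus, closedSpanE, image, mem_Ici, eq_comm]

theorem Hminus_eq : Hminus = closedSpanE (Iic (-2)) := by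
  simp only [Hminus, closedSpanE, image, mem_Iic, eq_comm]

theorem orthogonal_closedSpanE (A : Set ℤ) : (closedSpanE A)ᗮ = closedSpanE Aᶜ := by
  simpa only [closedSpanE, ell2Z.coe_stdBasis] using
    ell2Z.stdBasis.orthogonal_closure_span_image A

theorem closedSpanE_mem_invtSubmodule {T : ell2Z →L[ℂ] ell2Z} {A : Set ℤ}
    (hT : ∀ n ∈ A, T (e n) ∈ span ℂ (e '' A)) : closedSpanE A ∈ invtSubmodule T :=
  topologicalClosure_mem_invtSubmodule <| by
    rw [mem_invtSubmodule, span_le]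
    rintro _ ⟨n, hn, rfl⟩
    exact hT n hn

theorem closedSpanE_mem_invtSubmodule_adjoint {T : ell2Z →L[ℂ] ell2Z} {A : Set ℤ}
    (hT : ∀ n ∉ A, T (e n) ∈ span ℂ (e '' Aᶜ)) : closedSpanE A ∈ invtSubmodule (adjoint T) := by
  rw [ContinuousLinearMap.mem_invtSubmodule_adjoint_iff, orthogonal_closedSpanE]
  exact closedSpanE_mem_invtSubmodule hT

theorem closedSpanE_mem_invtSubmodule_of_children {T : ell2Z →L[ℂ] ell2Z} {A : Set ℤ}
    (hT : ∀ n, T (e n) ∈ span ℂ {e (1 + 2 * n), e (2 + 2 * n)})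
    (hA : ∀ n, (1 + 2 * n ∈ A ↔ n ∈ A) ∧ (2 + 2 * n ∈ A ↔ n ∈ A)) :
    closedSpanE A ∈ invtSubmodule T ∧ closedSpanE A ∈ invtSubmodule (adjoint T) := by
  have children_mem {B : Set ℤ} {n : ℤ} (h₁ : 1 + 2 * n ∈ B) (h₂ : 2 + 2 * n ∈ B) :
      T (e n) ∈ span ℂ (e '' B) :=
    span_mono (pair_subset (mem_image_of_mem e h₁) (mem_image_of_mem e h₂)) (hT n)
  exact ⟨closedSpanE_mem_invtSubmodule fun n hn => children_mem ((hA n).1.2 hn) ((hA n).2.2 hn),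
    closedSpanE_mem_invtSubmodule_adjoint fun n hn =>
      children_mem (mt (hA n).1.1 hn) (mt (hA n).2.1 hn)⟩

theorem stmt_15 (S₀ S₁ : ell2Z →L[ℂ] ell2Z)
    (hS₀ : ∀ n : ℤ, S₀ (e n) = (Real.sqrt 2 : ℂ)⁻¹ • (e (1 + 2 * n) + e (2 + 2 * n)))
    (hS₁ : ∀ n : ℤ, S₁ (e n) = (Real.sqrt 2 : ℂ)⁻¹ • (-e (1 + 2 * n) + e (2 + 2 * n))) :
    (∀ ξ ∈ Hplus, S₀ ξ ∈ Hplus ∧ S₁ ξ ∈ Hplus ∧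
      adjoint S₀ ξ ∈ Hplus ∧ adjoint S₁ ξ ∈ Hplus) ∧
    (∀ ξ ∈ Hminus, S₀ ξ ∈ Hminus ∧ S₁ ξ ∈ Hminus ∧
      adjoint S₀ ξ ∈ Hminus ∧ adjoint S₁ ξ ∈ Hminus) := by
  have left_mem (n : ℤ) : e (1 + 2 * n) ∈ span ℂ {e (1 + 2 * n), e (2 + 2 * n)} :=
    subset_span (mem_insert _ _)
  have right_mem (n : ℤ) : e (2 + 2 * n) ∈ span ℂ {e (1 + 2 * n), e (2 + 2 * n)} :=
    subset_span (mem_insert_of_mem _ rfl)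
  have h₀ (n : ℤ) : S₀ (e n) ∈ span ℂ {e (1 + 2 * n), e (2 + 2 * n)} :=
    hS₀ n ▸ smul_mem _ _ (add_mem (left_mem n) (right_mem n))
  have h₁ (n : ℤ) : S₁ (e n) ∈ span ℂ {e (1 + 2 * n), e (2 + 2 * n)} :=
    hS₁ n ▸ smul_mem _ _ (add_mem (neg_mem (left_mem n)) (right_mem n))
  have invariant {A : Set ℤ} (hA : ∀ n, (1 + 2 * n ∈ A ↔ n ∈ A) ∧ (2 + 2 * n ∈ A ↔ n ∈ A))
      (ξ : ell2Z) (hξ : ξ ∈ closedSpanE A) : S₀ ξ ∈ closedSpanE A ∧ S₁ ξ ∈ closedSpanE A ∧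
        adjoint S₀ ξ ∈ closedSpanE A ∧ adjoint S₁ ξ ∈ closedSpanE A := by
    obtain ⟨hS₀A, hS₀'A⟩ := closedSpanE_mem_invtSubmodule_of_children h₀ hA
    obtain ⟨hS₁A, hS₁'A⟩ := closedSpanE_mem_invtSubmodule_of_children h₁ hA
    exact ⟨hS₀A hξ, hS₁A hξ, hS₀'A hξ, hS₁'A hξ⟩
  rw [Hplus_eq, Hminus_eq]
  exact ⟨invariant fun n => by simp only [mem_Ici]; omega,
    invariant fun n => by simp only [mem_Iic]; omega⟩
end

section
/- Let θ ∈ [0, 2π) and let m_0^{(θ)}(z) = Σ_{k=0}^3 a_k z^k with the coefficients a_k given by the circle parametrization a_0 = (1−cos θ+sin θ)/(2√2), a_1 = (1−cos θ−sin θ)/(2√2), a_2 = (1+cos θ−sin θ)/(2√2), a_3 = (1+cos θ+sin θ)/(2√2). Then the zero set {z ∈ T : m_0^{(θ)}(−z) = 0} contains a nontrivial cycle for the doubling map z ↦ z² if and only if θ = π/2, in which case m_0^{(θ)}(z) = (1 + z³)/√2 and the cycle is {e^{2πi/3}, e^{4πi/3}}. -/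
/-!
Since `a₁ = a₀ + a₂ - a₃`, the polynomial factors as `m₀(-w) = (1 - w) q(w)` with
`q(w) = a₃ w² + (a₃ - a₂) w + a₀`, and `q` is never identically zero because `a₀ + a₂ = 1/√2`.
A nontrivial cycle avoids the fixed point `1`, so all of its points are roots of `q`. For a
point `w` of the cycle, `w`, `w²`, `w⁴` are roots, consecutive ones distinct, so `w⁴ = w`:
the cycle consists of the two primitive cube roots of unity. Then `q` is a multiple of
`w² + w + 1`, i.e. `a₂ = 0` and `a₀ = a₃`, which forces `cos θ = 0`, `sin θ = 1`.
Conversely, at `θ = π/2` the zeros of `m₀(-z) = (1 - z³)/√2` other than `1` are the primitive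
cube roots of unity, which squaring swaps.
-/

open Complex

/-- `C` is a cycle of length `k` for the doubling map `z ↦ z²` on the unit circle:
`k` distinct points of the circle, permuted cyclically by squaring. -/
def IsCycleOfLength (k : ℕ) (C : Set ℂ) : Prop :=
  0 < k ∧ ∃ z : ZMod k → ℂ, Function.Injective z ∧ (∀ i, ‖z i‖ = 1) ∧
    (∀ i, z (i + 1) = z i ^ 2) ∧ C = Set.range z

section Algebra

variable {K : Type*} [Field K] {a b c x y z : K}

lemma sq_ne_self_of_ne_zero_of_ne_one (h0 : x ≠ 0) (h1 : x ≠ 1) : x ^ 2 ≠ x := fun h =>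
  h1 (mul_left_cancel₀ h0 (by rw [← sq, h, mul_one]))

lemma sq_add_self_add_one_eq_zero (h3 : x ^ 3 = 1) (h1 : x ≠ 1) : x ^ 2 + x + 1 = 0 := by
  have h : (x - 1) * (x ^ 2 + x + 1) = 0 := by linear_combination h3
  exact (mul_eq_zero.mp h).resolve_left (sub_ne_zero.mpr h1)

lemma quadratic_coeffs_eq_zero_of_three_roots (hxy : x ≠ y) (hxz : x ≠ z) (hyz : y ≠ z)
    (hx : a * x ^ 2 + b * x + c = 0) (hy : a * y ^ 2 + b * y + c = 0)
    (hz : a * z ^ 2 + b * z + c = 0) : a = 0 ∧ b = 0 ∧ c = 0 := by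
  have hxy' := sub_ne_zero.mpr hxy
  have ha : a = 0 := by
    have h : a * ((x - y) * (x - z) * (y - z)) = 0 := by
      linear_combination (y - z) * hx - (x - z) * hy + (x - y) * hz
    simpa [hxy', sub_ne_zero.mpr hxz, sub_ne_zero.mpr hyz] using h
  have hb : b = 0 := by
    have h : b * (x - y) = 0 := by linear_combination hx - hy - (x ^ 2 - y ^ 2) * ha
    simpa [hxy'] using h
  exact ⟨ha, hb, by linear_combination hx - x ^ 2 * ha - x * hb⟩

lemma quadratic_coeffs_eq_of_roots_of_sq_add_self_add_one (hxy : x ≠ y)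
    (hx : a * x ^ 2 + b * x + c = 0) (hy : a * y ^ 2 + b * y + c = 0)
    (hx' : x ^ 2 + x + 1 = 0) (hy' : y ^ 2 + y + 1 = 0) : b = a ∧ c = a := by
  have hb : (b - a) * (x - y) = 0 := by linear_combination hx - hy - a * hx' + a * hy'
  have hb' : b = a := sub_eq_zero.mp ((mul_eq_zero.mp hb).resolve_right (sub_ne_zero.mpr hxy))
  exact ⟨hb', by linear_combination hx - a * hx' - x * hb'⟩

lemma IsPrimitiveRoot.eq_or_eq_sq_of_pow_three_eq_one {ζ : K} (hζ : IsPrimitiveRoot ζ 3)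
    (h3 : x ^ 3 = 1) (h1 : x ≠ 1) : x = ζ ∨ x = ζ ^ 2 := by
  obtain ⟨i, hi, rfl⟩ := hζ.eq_pow_of_pow_eq_one h3
  interval_cases i
  · exact absurd (pow_zero ζ) h1
  · exact .inl (pow_one ζ)
  · exact .inr rfl

end Algebra

namespace IsCycleOfLength

variable {k : ℕ} {C : Set ℂ} {w : ℂ}

lemma nonempty (hC : IsCycleOfLength k C) : C.Nonempty := by
  obtain ⟨hk, z, -, -, -, rfl⟩ := hC
  have : NeZero k := ⟨hk.ne'⟩
  exact Set.range_nonempty z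

lemma norm_eq_one (hC : IsCycleOfLength k C) (hw : w ∈ C) : ‖w‖ = 1 := by
  obtain ⟨-, z, -, hz, -, rfl⟩ := hC
  obtain ⟨i, rfl⟩ := hw
  exact hz i

lemma ne_zero (hC : IsCycleOfLength k C) (hw : w ∈ C) : w ≠ 0 := by
  rintro rfl
  simpa using hC.norm_eq_one hw

lemma sq_mem (hC : IsCycleOfLength k C) (hw : w ∈ C) : w ^ 2 ∈ C := by
  obtain ⟨-, z, -, -, hsq, rfl⟩ := hC
  obtain ⟨i, rfl⟩ := hw
  exact ⟨i + 1, hsq i⟩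

lemma one_notMem (hC : IsCycleOfLength k C) (hne : C ≠ {1}) : 1 ∉ C := by
  obtain ⟨hk, z, -, -, hsq, rfl⟩ := hC
  have : NeZero k := ⟨hk.ne'⟩
  rintro ⟨i, hi⟩
  have hfrom : ∀ n : ℕ, z (i + n) = 1 := by
    intro n
    induction n with
    | zero => simpa using hi
    | succ m ih => rw [Nat.cast_succ, ← add_assoc, hsq, ih, one_pow]
  refine hne (Set.eq_singleton_iff_unique_mem.mpr ⟨⟨i, hi⟩, ?_⟩)
  rintro _ ⟨j, rfl⟩
  simpa using hfrom (j - i).val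

lemma sq_ne_self (hC : IsCycleOfLength k C) (h1 : 1 ∉ C) (hw : w ∈ C) : w ^ 2 ≠ w :=
  sq_ne_self_of_ne_zero_of_ne_one (hC.ne_zero hw) (ne_of_mem_of_not_mem hw h1)

lemma pow_three_eq_one_of_subset_roots (hC : IsCycleOfLength k C) (h1 : 1 ∉ C) {a b c : ℂ}
    (habc : ¬(a = 0 ∧ b = 0 ∧ c = 0)) (hroots : ∀ z ∈ C, a * z ^ 2 + b * z + c = 0)
    (hw : w ∈ C) : w ^ 3 = 1 := by
  have hw2 := hC.sq_mem hw
  have hw4 := hC.sq_mem hw2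
  by_contra h3
  have h41 : (w ^ 2) ^ 2 ≠ w := fun h =>
    h3 (mul_left_cancel₀ (hC.ne_zero hw) (by linear_combination h))
  exact habc (quadratic_coeffs_eq_zero_of_three_roots (hC.sq_ne_self h1 hw).symm h41.symm
    (hC.sq_ne_self h1 hw2).symm (hroots w hw) (hroots _ hw2) (hroots _ hw4))

lemma coeffs_eq_of_subset_roots (hC : IsCycleOfLength k C) (h1 : 1 ∉ C) {a b c : ℂ}
    (habc : ¬(a = 0 ∧ b = 0 ∧ c = 0)) (hroots : ∀ z ∈ C, a * z ^ 2 + b * z + c = 0) :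
    b = a ∧ c = a := by
  obtain ⟨w, hw⟩ := hC.nonempty
  have hw2 := hC.sq_mem hw
  have hcube {z} (hz : z ∈ C) : z ^ 2 + z + 1 = 0 :=
    sq_add_self_add_one_eq_zero (hC.pow_three_eq_one_of_subset_roots h1 habc hroots hz)
      (ne_of_mem_of_not_mem hz h1)
  exact quadratic_coeffs_eq_of_roots_of_sq_add_self_add_one (hC.sq_ne_self h1 hw).symm
    (hroots w hw) (hroots _ hw2) (hcube hw) (hcube hw2)

lemma eq_of_pow_three_eq_one (hC : IsCycleOfLength k C) (h1 : 1 ∉ C) {ζ : ℂ}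
    (hζ : IsPrimitiveRoot ζ 3) (h3 : ∀ z ∈ C, z ^ 3 = 1) : C = {ζ, ζ ^ 2} := by
  have hsub : C ⊆ {ζ, ζ ^ 2} := fun z hz =>
    hζ.eq_or_eq_sq_of_pow_three_eq_one (h3 z hz) (ne_of_mem_of_not_mem hz h1)
  refine hsub.antisymm ?_
  obtain ⟨w, hw⟩ := hC.nonempty
  have hw2 := hC.sq_mem hw
  rcases hsub hw with rfl | rfl
  · exact Set.pair_subset hw hw2
  · have hζ4 : (ζ ^ 2) ^ 2 = ζ := by linear_combination ζ * hζ.pow_eq_one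
    exact Set.pair_subset (hζ4 ▸ hw2) hw

end IsCycleOfLength

lemma IsPrimitiveRoot.isCycleOfLength_two {ζ : ℂ} (hζ : IsPrimitiveRoot ζ 3) :
    IsCycleOfLength 2 {ζ, ζ ^ 2} := by
  have hne : ζ ^ 2 ≠ ζ :=
    sq_ne_self_of_ne_zero_of_ne_one (hζ.ne_zero three_ne_zero) (hζ.ne_one (by norm_num))
  refine ⟨two_pos, ![ζ, ζ ^ 2], ?_, ?_, ?_, ?_⟩
  · intro i j hij
    fin_cases i <;> fin_cases j <;> first | rfl | simp_all [eq_comm]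
  · intro i
    fin_cases i <;> simp [hζ.norm'_eq_one three_ne_zero]
  · intro i
    fin_cases i
    · rfl
    · show ζ = (ζ ^ 2) ^ 2
      linear_combination -ζ * hζ.pow_eq_one
  · exact (Matrix.range_cons_cons_empty ζ (ζ ^ 2) ![]).symm

lemma isPrimitiveRoot_exp_two_pi_I_div_three : IsPrimitiveRoot (exp (2 * Real.pi * I / 3)) 3 := by
  simpa using isPrimitiveRoot_exp 3 three_ne_zero

lemma exp_four_pi_I_div_three : exp (4 * Real.pi * I / 3) = exp (2 * Real.pi * I / 3) ^ 2 := by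
  rw [← exp_nat_mul]
  ring_nf

lemma IsPrimitiveRoot.pow_three_eq_one_of_mem_pair {M : Type*} [CommMonoid M] {ζ z : M}
    (hζ : IsPrimitiveRoot ζ 3) (hz : z ∈ ({ζ, ζ ^ 2} : Set M)) : z ^ 3 = 1 := by
  rcases hz with rfl | rfl
  · exact hζ.pow_eq_one
  · rw [← pow_mul, mul_comm, pow_mul, hζ.pow_eq_one, one_pow]

lemma cubic_neg_eq_one_sub_mul_quadratic {R : Type*} [CommRing R] {a₀ a₁ a₂ a₃ : R}
    (h : a₁ = a₀ + a₂ - a₃) (w : R) :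
    a₀ + a₁ * -w + a₂ * (-w) ^ 2 + a₃ * (-w) ^ 3 =
      (1 - w) * (a₃ * w ^ 2 + (a₃ - a₂) * w + a₀) := by
  subst h; ring

lemma eq_pi_div_two_of_sin_eq_one {θ : ℝ} (hθ : θ ∈ Set.Ico 0 (2 * Real.pi))
    (h : Real.sin θ = 1) : θ = Real.pi / 2 := by
  obtain ⟨n, rfl⟩ := Real.sin_eq_one_iff.mp h
  have hπ := Real.pi_pos
  have hlo : (-1 : ℝ) < n := by nlinarith [hθ.1]
  have hhi : (n : ℝ) < 1 := by nlinarith [hθ.2]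
  obtain rfl : n = 0 := by
    have : (-1 : ℤ) < n := by exact_mod_cast hlo
    have : n < 1 := by exact_mod_cast hhi
    omega
  simp

lemma eq_pi_div_two_of_coeffs {θ : ℝ} (hθ : θ ∈ Set.Ico 0 (2 * Real.pi))
    (h2 : (1 + Real.cos θ - Real.sin θ) / (2 * Real.sqrt 2) = 0)
    (h03 : (1 - Real.cos θ + Real.sin θ) / (2 * Real.sqrt 2) =
      (1 + Real.cos θ + Real.sin θ) / (2 * Real.sqrt 2)) : θ = Real.pi / 2 := by
  field_simp at h2 h03
  exact eq_pi_div_two_of_sin_eq_one hθ (by linarith)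

theorem stmt_17 (θ : ℝ) (hθ : θ ∈ Set.Ico 0 (2 * Real.pi))
    (a : Fin 4 → ℝ)
    (ha0 : a 0 = (1 - Real.cos θ + Real.sin θ) / (2 * Real.sqrt 2))
    (ha1 : a 1 = (1 - Real.cos θ - Real.sin θ) / (2 * Real.sqrt 2))
    (ha2 : a 2 = (1 + Real.cos θ - Real.sin θ) / (2 * Real.sqrt 2))
    (ha3 : a 3 = (1 + Real.cos θ + Real.sin θ) / (2 * Real.sqrt 2))
    (m₀ : ℂ → ℂ)
    (hm₀ : ∀ z : ℂ, m₀ z = a 0 + a 1 * z + a 2 * z ^ 2 + a 3 * z ^ 3) :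
    ((∃ (k : ℕ) (C : Set ℂ), IsCycleOfLength k C ∧ C ≠ {1} ∧
        C ⊆ {z : ℂ | ‖z‖ = 1 ∧ m₀ (-z) = 0}) ↔ θ = Real.pi / 2) ∧
    (θ = Real.pi / 2 →
      (∀ z : ℂ, m₀ z = (1 + z ^ 3) / Real.sqrt 2) ∧
      ∀ (k : ℕ) (C : Set ℂ), IsCycleOfLength k C → C ≠ {1} →
        C ⊆ {z : ℂ | ‖z‖ = 1 ∧ m₀ (-z) = 0} →
        C = {exp (2 * Real.pi * I / 3), exp (4 * Real.pi * I / 3)}) := by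
  have hs2 : (Real.sqrt 2 : ℂ) ≠ 0 := by exact_mod_cast (show Real.sqrt 2 ≠ 0 by positivity)
  have hfac (w : ℂ) : m₀ (-w) = (1 - w) * (a 3 * w ^ 2 + (a 3 - a 2) * w + a 0) := by
    rw [hm₀]
    exact cubic_neg_eq_one_sub_mul_quadratic (by rw [ha0, ha1, ha2, ha3]; push_cast; ring) w
  have hformula (ht : θ = Real.pi / 2) (z : ℂ) : m₀ z = (1 + z ^ 3) / Real.sqrt 2 := by
    simp only [hm₀, ha0, ha1, ha2, ha3, ht, Real.cos_pi_div_two, Real.sin_pi_div_two]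
    push_cast
    field_simp
    ring
  have hzero (ht : θ = Real.pi / 2) (z : ℂ) : m₀ (-z) = 0 ↔ z ^ 3 = 1 := by
    rw [hformula ht, div_eq_zero_iff, or_iff_left hs2, Odd.neg_pow (by decide),
      ← sub_eq_add_neg, sub_eq_zero, eq_comm]
  set ζ := exp (2 * Real.pi * I / 3)
  have hζ : IsPrimitiveRoot ζ 3 := isPrimitiveRoot_exp_two_pi_I_div_three
  refine ⟨⟨?_, fun ht => ?_⟩, fun ht => ⟨hformula ht, fun k C hC hne hsub => ?_⟩⟩
  · rintro ⟨k, C, hC, hne, hsub⟩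
    have h1 := hC.one_notMem hne
    have hroots : ∀ z ∈ C, (a 3 : ℂ) * z ^ 2 + (a 3 - a 2) * z + a 0 = 0 := fun z hz =>
      (mul_eq_zero.mp (hfac z ▸ (hsub hz).2)).resolve_left
        (sub_ne_zero.mpr (ne_of_mem_of_not_mem hz h1).symm)
    have hsum : a 0 + a 2 ≠ 0 := by
      rw [ha0, ha2, ← add_div]
      ring_nf
      positivity
    obtain ⟨hb, hc⟩ := hC.coeffs_eq_of_subset_roots h1 (fun ⟨h3, h32, h0⟩ => hsum <| by
      exact_mod_cast (by linear_combination h0 - h32 + h3 : (a 0 : ℂ) + a 2 = 0)) hroots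
    have ha2' : a 2 = 0 := by exact_mod_cast (by linear_combination -hb : (a 2 : ℂ) = 0)
    have ha03 : a 0 = a 3 := by exact_mod_cast hc
    exact eq_pi_div_two_of_coeffs hθ (ha2 ▸ ha2') (ha0 ▸ ha3 ▸ ha03)
  · refine ⟨2, _, hζ.isCycleOfLength_two, fun h => hζ.ne_one (by norm_num)
      (Set.mem_singleton_iff.mp (h ▸ Set.mem_insert ζ {ζ ^ 2})), fun z hz => ?_⟩
    have h3 := hζ.pow_three_eq_one_of_mem_pair hz
    exact ⟨norm_eq_one_of_pow_eq_one h3 three_ne_zero, (hzero ht z).mpr h3⟩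
  · rw [exp_four_pi_I_div_three]
    exact hC.eq_of_pow_three_eq_one (hC.one_notMem hne) hζ fun z hz => (hzero ht z).mp (hsub hz).2
end
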